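/- Under the hypotheses of the contraction theorem (Case 1: each fₖ μₖ-strongly convex and Lₖ-smooth, α ∈ (0, α₀] with α₀ = min_k 2nπₖ/(Lₖ+μₖ)), the fixed point w^α of T_α satisfies ‖w^α‖_{π⊗1_d} ≤ (1/C)‖J(∇F(0))‖_{π⊗1_d}, uniformly in α, where C = min_k μₖLₖ/(nπₖ(μₖ+Lₖ)). -/

import Mathlib

/-!
Write `w = J v - α J(∇F(0))` with `vⱼ = wⱼ - α (∇fⱼ(wⱼ / (n πⱼ)) - ∇fⱼ(0))`. The mixing map `J`
is nonexpansive in the `π`-weighted norm (Cauchy–Schwarz with the weights `Wₖⱼ πⱼ`, using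
`W π = π` and column-stochasticity), and each `vⱼ` is at most `(1 - α C) ‖wⱼ‖` by Nesterov's
inequality `‖∇f x - ∇f y‖² + μ L ‖x - y‖² ≤ (μ + L) ⟪∇f x - ∇f y, x - y⟫` for `μ`-strongly convex,
`L`-smooth `f`. Hence `‖w‖ ≤ (1 - α C) ‖w‖ + α ‖J ∇F(0)‖`, i.e. `C ‖w‖ ≤ ‖J ∇F(0)‖`.
-/

open Set InnerProductSpace

section Gradient

variable {E : Type*} [NormedAddCommGroup E] [InnerProductSpace ℝ E] [CompleteSpace E]

theorem HasGradientAt.sub {f g : E → ℝ} {f' g' x : E} (hf : HasGradientAt f f' x)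
    (hg : HasGradientAt g g' x) : HasGradientAt (fun z => f z - g z) (f' - g') x := by
  rw [hasGradientAt_iff_hasFDerivAt, map_sub]
  exact hf.hasFDerivAt.sub hg.hasFDerivAt

theorem hasGradientAt_inner_right (a x : E) : HasGradientAt (fun z => ⟪a, z⟫_ℝ) a x :=
  (innerSL ℝ a).hasFDerivAt

theorem hasGradientAt_half_mul_norm_sq (μ : ℝ) (x : E) :
    HasGradientAt (fun z => μ / 2 * ‖z‖ ^ 2) (μ • x) x := by
  refine (((hasStrictFDerivAt_norm_sq x).hasFDerivAt).const_mul (μ / 2)).congr_fderiv ?_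
  ext w
  simp only [smul_apply, coe_innerSL_apply, nsmul_eq_mul, Nat.cast_ofNat,
    smul_eq_mul, map_smul, toDual_apply_apply]
  ring

variable {g : E → ℝ} {G : E → E}

theorem hasDerivAt_comp_add_smul (hG : ∀ z, HasGradientAt g (G z) z) (x v : E) (t : ℝ) :
    HasDerivAt (fun s : ℝ => g (x + s • v)) ⟪G (x + t • v), v⟫_ℝ t := by
  have hline : HasDerivAt (fun s : ℝ => x + s • v) v t := by
    simpa using ((hasDerivAt_id t).smul_const v).const_add x
  simpa [toDual_apply_apply, Function.comp_def] using
    (hG (x + t • v)).hasFDerivAt.comp_hasDerivAt t hline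

theorem ConvexOn.add_inner_le (hg : ConvexOn ℝ univ g) (hG : ∀ z, HasGradientAt g (G z) z)
    (x y : E) : g x + ⟪G x, y - x⟫_ℝ ≤ g y := by
  have hline : ConvexOn ℝ univ fun t : ℝ => g (x + t • (y - x)) := by
    simpa [Function.comp_def, AffineMap.lineMap_apply_module', add_comm] using
      hg.comp_affineMap (AffineMap.lineMap x y : ℝ →ᵃ[ℝ] E)
  have hslope := hline.le_slope_of_hasDerivAt (mem_univ 0) (mem_univ 1) one_pos
    (by simpa using hasDerivAt_comp_add_smul hG x (y - x) 0)
  simp only [slope_def_field, one_smul, add_sub_cancel, zero_smul, add_zero, sub_zero,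
    div_one] at hslope
  linarith

theorem le_add_inner_add_of_inner_sub_le (hG : ∀ z, HasGradientAt g (G z) z) {c : ℝ}
    (hGc : ∀ a b, ⟪G a - G b, a - b⟫_ℝ ≤ c * ‖a - b‖ ^ 2) (x y : E) :
    g y ≤ g x + ⟪G x, y - x⟫_ℝ + c / 2 * ‖y - x‖ ^ 2 := by
  set v := y - x
  set ψ : ℝ → ℝ := fun t => g (x + t • v) - t * ⟪G x, v⟫_ℝ - c * t ^ 2 / 2 * ‖v‖ ^ 2
  have hψ' (t : ℝ) : HasDerivAt ψ (⟪G (x + t • v), v⟫_ℝ - ⟪G x, v⟫_ℝ - c * t * ‖v‖ ^ 2) t := by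
    have hlin : HasDerivAt (fun t : ℝ => t * ⟪G x, v⟫_ℝ) ⟪G x, v⟫_ℝ t := by
      simpa using (hasDerivAt_id t).mul_const ⟪G x, v⟫_ℝ
    have hquad : HasDerivAt (fun t : ℝ => c * t ^ 2 / 2 * ‖v‖ ^ 2) (c * t * ‖v‖ ^ 2) t := by
      refine ((((hasDerivAt_pow 2 t).const_mul c).div_const 2).mul_const _).congr_deriv ?_
      ring
    exact ((hasDerivAt_comp_add_smul hG x v t).sub hlin).sub hquad
  have hanti : AntitoneOn ψ (Icc 0 1) := by
    refine antitoneOn_of_deriv_nonpos (convex_Icc 0 1)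
      (fun t _ => (hψ' t).continuousAt.continuousWithinAt)
      (fun t _ => (hψ' t).differentiableAt.differentiableWithinAt) fun t ht => ?_
    rw [interior_Icc] at ht
    have hstep := hGc (x + t • v) x
    rw [add_sub_cancel_left, norm_smul, Real.norm_eq_abs, mul_pow, sq_abs, inner_sub_left,
      real_inner_smul_right, real_inner_smul_right] at hstep
    rw [(hψ' t).deriv]
    nlinarith [ht.1]
  have h01 := hanti (left_mem_Icc.2 zero_le_one) (right_mem_Icc.2 zero_le_one) zero_le_one
  simp only [ψ, v, one_smul, add_sub_cancel, zero_smul, add_zero] at h01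
  linarith

theorem ConvexOn.add_inner_add_norm_sq_le (hg : ConvexOn ℝ univ g)
    (hG : ∀ z, HasGradientAt g (G z) z) {c : ℝ} (hc : 0 < c)
    (hGc : ∀ a b, ⟪G a - G b, a - b⟫_ℝ ≤ c * ‖a - b‖ ^ 2) (p q : E) :
    g p + ⟪G p, q - p⟫_ℝ + ‖G q - G p‖ ^ 2 / (2 * c) ≤ g q := by
  -- `φ` is convex with gradient vanishing at `p`, so `p` minimises it; a gradient step of
  -- length `1 / c` from `q` then decreases `φ` by at least `‖∇φ q‖² / (2c)`.
  set φ : E → ℝ := fun z => g z - ⟪G p, z⟫_ℝ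
  have hφ : ∀ z, HasGradientAt φ (G z - G p) z := fun z =>
    (hG z).sub (hasGradientAt_inner_right (G p) z)
  have hφc : ConvexOn ℝ univ φ := hg.sub ((innerₛₗ ℝ (G p)).concaveOn convex_univ)
  set z := q - (1 / c) • (G q - G p)
  have hmin : φ p ≤ φ z := by simpa using hφc.add_inner_le hφ p z
  have hdescent : φ z ≤ φ q - ‖G q - G p‖ ^ 2 / (2 * c) := by
    have h := le_add_inner_add_of_inner_sub_le hφ (fun a b => by simpa using hGc a b) q z
    simp only [z, sub_sub_cancel_left, inner_neg_right, norm_neg, real_inner_smul_right,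
      norm_smul, real_inner_self_eq_norm_sq, Real.norm_of_nonneg (one_div_pos.2 hc).le] at h
    convert h using 1
    field_simp
    ring
  simp only [φ, inner_sub_right] at hmin hdescent ⊢
  linarith

theorem ConvexOn.norm_sub_sq_le_mul_inner (hg : ConvexOn ℝ univ g)
    (hG : ∀ z, HasGradientAt g (G z) z) {c : ℝ} (hc : 0 ≤ c)
    (hGc : ∀ a b, ⟪G a - G b, a - b⟫_ℝ ≤ c * ‖a - b‖ ^ 2) (x y : E) :
    ‖G x - G y‖ ^ 2 ≤ c * ⟪G x - G y, x - y⟫_ℝ := by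
  have hpos : ∀ c' > 0, (∀ a b, ⟪G a - G b, a - b⟫_ℝ ≤ c' * ‖a - b‖ ^ 2) →
      ‖G x - G y‖ ^ 2 ≤ c' * ⟪G x - G y, x - y⟫_ℝ := by
    intro c' hc' hGc'
    have hxy := hg.add_inner_add_norm_sq_le hG hc' hGc' x y
    have hyx := hg.add_inner_add_norm_sq_le hG hc' hGc' y x
    rw [norm_sub_rev] at hxy
    have h : ‖G x - G y‖ ^ 2 / c' ≤ ⟪G x - G y, x - y⟫_ℝ := by
      have htwo : ‖G x - G y‖ ^ 2 / c' = 2 * (‖G x - G y‖ ^ 2 / (2 * c')) := by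
        field_simp
      simp only [inner_sub_left, inner_sub_right] at hxy hyx ⊢
      linarith
    rwa [div_le_iff₀' hc'] at h
  rcases hc.eq_or_lt with rfl | hc
  · have h₁ := hpos 1 one_pos fun a b =>
      (hGc a b).trans (by simp only [zero_mul, one_mul]; positivity)
    have h₀ := hGc x y
    simp only [zero_mul] at h₀ ⊢
    linarith
  · exact hpos c hc hGc

theorem norm_sub_sq_add_mul_sq_le_mul_inner (hG : ∀ z, HasGradientAt g (G z) z) {μ L : ℝ}
    (hL : 0 ≤ L) (hμL : μ ≤ L) (hsc : ConvexOn ℝ univ fun z => g z - μ / 2 * ‖z‖ ^ 2)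
    (hGL : LipschitzWith L.toNNReal G) (x y : E) :
    ‖G x - G y‖ ^ 2 + μ * L * ‖x - y‖ ^ 2 ≤ (μ + L) * ⟪G x - G y, x - y⟫_ℝ := by
  -- `g - μ/2 ‖·‖²` is convex with `⟪∇ a - ∇ b, a - b⟫ ≤ (L - μ) ‖a - b‖²`; expanding its
  -- co-coercivity gives the claim.
  have hshift : ∀ a b, G a - μ • a - (G b - μ • b) = (G a - G b) - μ • (a - b) := fun a b => by
    rw [smul_sub]; abel
  have hLip : ∀ a b, ⟪G a - G b, a - b⟫_ℝ ≤ L * ‖a - b‖ ^ 2 := fun a b => by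
    have := hGL.dist_le_mul a b
    rw [dist_eq_norm, dist_eq_norm, Real.coe_toNNReal L hL] at this
    nlinarith [real_inner_le_norm (G a - G b) (a - b), norm_nonneg (a - b)]
  have hcoco := hsc.norm_sub_sq_le_mul_inner
    (fun z => (hG z).sub (hasGradientAt_half_mul_norm_sq μ z)) (sub_nonneg.2 hμL)
    (fun a b => by
      rw [hshift, inner_sub_left, real_inner_smul_left, real_inner_self_eq_norm_sq]
      linarith [hLip a b]) x y
  rw [hshift] at hcoco
  generalize G x - G y = u at hcoco ⊢
  generalize x - y = w at hcoco ⊢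
  rw [norm_sub_sq_real, inner_sub_left, real_inner_smul_left, real_inner_smul_right,
    real_inner_self_eq_norm_sq, norm_smul, Real.norm_eq_abs, mul_pow, sq_abs] at hcoco
  linarith

end Gradient

theorem norm_sub_smul_sq_le_of_norm_sq_add_le_inner {E : Type*} [NormedAddCommGroup E]
    [InnerProductSpace ℝ E] {u v : E} {a b α : ℝ} (ha : 0 < a) (hα₀ : 0 ≤ α) (hα : α ≤ 2 / a)
    (h : ‖u‖ ^ 2 + b * ‖v‖ ^ 2 ≤ a * ⟪u, v⟫_ℝ) :
    ‖v - α • u‖ ^ 2 ≤ (1 - α * b / a) ^ 2 * ‖v‖ ^ 2 := by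
  rw [norm_sub_sq_real, real_inner_smul_right, norm_smul, Real.norm_eq_abs, mul_pow, sq_abs,
    real_inner_comm]
  have hinner : α / a * ‖u‖ ^ 2 + α * b / a * ‖v‖ ^ 2 ≤ α * ⟪u, v⟫_ℝ := by
    have := mul_le_mul_of_nonneg_left h (div_nonneg hα₀ ha.le)
    field_simp at this ⊢
    linarith
  have hαα : α ^ 2 * ‖u‖ ^ 2 ≤ 2 * (α / a * ‖u‖ ^ 2) := by
    calc α ^ 2 * ‖u‖ ^ 2 = α * α * ‖u‖ ^ 2 := by ring
      _ ≤ 2 / a * α * ‖u‖ ^ 2 := by gcongr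
      _ = 2 * (α / a * ‖u‖ ^ 2) := by ring
  nlinarith [mul_nonneg (sq_nonneg (α * b / a)) (sq_nonneg ‖v‖)]

/-- With `c = n πₖ`, the minimum over the agents `k` of these rates is the constant `C`. -/
noncomputable def contractionRate (μ L c : ℝ) : ℝ := μ * L / (c * (μ + L))

theorem contractionRate_pos {μ L c : ℝ} (hμ : 0 < μ) (hL : 0 < L) (hc : 0 < c) :
    0 < contractionRate μ L c := by
  unfold contractionRate; positivity

theorem mul_contractionRate_le_one {μ L c α : ℝ} (hμ : 0 < μ) (hL : 0 < L) (hc : 0 < c)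
    (hα : α ≤ 2 * c / (L + μ)) : α * contractionRate μ L c ≤ 1 := by
  calc α * contractionRate μ L c ≤ 2 * c / (L + μ) * contractionRate μ L c :=
        mul_le_mul_of_nonneg_right hα (contractionRate_pos hμ hL hc).le
    _ = 2 * μ * L / (μ + L) ^ 2 := by unfold contractionRate; field_simp; ring
    _ ≤ 1 := by rw [div_le_one (by positivity)]; nlinarith [sq_nonneg (μ - L)]

theorem norm_sub_smul_gradient_sub_le {E : Type*} [NormedAddCommGroup E] [InnerProductSpace ℝ E]
    [CompleteSpace E] {g : E → ℝ} {G : E → E} (hG : ∀ z, HasGradientAt g (G z) z) {μ L c α : ℝ}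
    (hμ : 0 < μ) (hμL : μ ≤ L) (hsc : ConvexOn ℝ univ fun z => g z - μ / 2 * ‖z‖ ^ 2)
    (hGL : LipschitzWith L.toNNReal G) (hc : 0 < c) (hα₀ : 0 ≤ α) (hα : α ≤ 2 * c / (L + μ))
    (x : E) :
    ‖x - α • (G ((1 / c) • x) - G 0)‖ ≤ (1 - α * contractionRate μ L c) * ‖x‖ := by
  have hL : 0 < L := hμ.trans_le hμL
  have hscaled : ‖G ((1 / c) • x) - G 0‖ ^ 2 + μ * L / c ^ 2 * ‖x‖ ^ 2
      ≤ (μ + L) / c * ⟪G ((1 / c) • x) - G 0, x⟫_ℝ := by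
    have h := norm_sub_sq_add_mul_sq_le_mul_inner hG hL.le hμL hsc hGL ((1 / c) • x) 0
    rw [sub_zero, norm_smul, real_inner_smul_right, Real.norm_of_nonneg (by positivity)] at h
    convert h using 1 <;> ring
  have hsq := norm_sub_smul_sq_le_of_norm_sq_add_le_inner (by positivity) hα₀
    (by rwa [div_div_eq_mul_div, add_comm]) hscaled
  have hrate : α * (μ * L / c ^ 2) / ((μ + L) / c) = α * contractionRate μ L c := by
    unfold contractionRate; field_simp
  rw [hrate] at hsq
  have hnonneg : 0 ≤ 1 - α * contractionRate μ L c :=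
    sub_nonneg.2 (mul_contractionRate_le_one hμ hL hc hα)
  exact (pow_le_pow_iff_left₀ (norm_nonneg _) (mul_nonneg hnonneg (norm_nonneg x))
    two_ne_zero).1 (by rwa [mul_pow])

section WeightedNorm

variable {ι E : Type*} [Fintype ι] [NormedAddCommGroup E] [NormedSpace ℝ E]

/-- The norm `‖·‖_{π ⊗ 1_d}` on families of agent states. -/
noncomputable def weightedNorm (π : ι → ℝ) (x : ι → E) : ℝ := √(∑ k, 1 / π k * ‖x k‖ ^ 2)

theorem weightedNorm_eq_norm_toLp {π : ι → ℝ} (hπ : ∀ k, 0 ≤ π k) (x : ι → E) :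
    weightedNorm π x = ‖(WithLp.toLp 2 fun k => √(1 / π k) • x k : PiLp 2 fun _ : ι => E)‖ := by
  rw [weightedNorm, PiLp.norm_eq_of_L2]
  congr 1
  refine Finset.sum_congr rfl fun k _ => ?_
  rw [WithLp.ofLp_toLp, norm_smul, mul_pow, Real.norm_of_nonneg (Real.sqrt_nonneg _),
    Real.sq_sqrt (one_div_nonneg.2 (hπ k))]

theorem weightedNorm_sub_le {π : ι → ℝ} (hπ : ∀ k, 0 ≤ π k) (x y : ι → E) :
    weightedNorm π (x - y) ≤ weightedNorm π x + weightedNorm π y := by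
  simp only [weightedNorm_eq_norm_toLp hπ, Pi.sub_apply, smul_sub]
  exact norm_sub_le (WithLp.toLp 2 fun k => √(1 / π k) • x k : PiLp 2 fun _ : ι => E)
    (WithLp.toLp 2 fun k => √(1 / π k) • y k)

theorem weightedNorm_smul (π : ι → ℝ) (c : ℝ) (x : ι → E) :
    weightedNorm π (c • x) = |c| * weightedNorm π x := by
  simp only [weightedNorm, Pi.smul_apply, norm_smul, Real.norm_eq_abs, mul_pow, sq_abs]
  rw [← Real.sqrt_sq_eq_abs, ← Real.sqrt_mul (sq_nonneg c), Finset.mul_sum]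
  simp only [mul_left_comm]

theorem weightedNorm_le_mul {π : ι → ℝ} (hπ : ∀ k, 0 ≤ π k) {r : ℝ} (hr : 0 ≤ r) {x y : ι → E}
    (h : ∀ k, ‖x k‖ ≤ r * ‖y k‖) : weightedNorm π x ≤ r * weightedNorm π y := by
  calc weightedNorm π x ≤ weightedNorm π (r • y) := by
        refine Real.sqrt_le_sqrt (Finset.sum_le_sum fun k _ => ?_)
        have := hπ k
        rw [Pi.smul_apply, norm_smul, Real.norm_of_nonneg hr]
        gcongr
        exact h k
    _ = r * weightedNorm π y := by rw [weightedNorm_smul, abs_of_nonneg hr]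

theorem weightedNorm_sum_smul_le {π : ι → ℝ} {W : Matrix ι ι ℝ} (hW : ∀ i j, 0 ≤ W i j)
    (hW_col : ∀ j, ∑ k, W k j = 1) (hπ : ∀ k, 0 < π k) (hπ_eig : ∀ k, ∑ j, W k j * π j = π k)
    (x : ι → E) : weightedNorm π (fun k => ∑ j, W k j • x j) ≤ weightedNorm π x := by
  -- Cauchy–Schwarz with the weights `W k j * π j`, which sum to `π k` over `j`
  have hrow (k : ι) : ‖∑ j, W k j • x j‖ ^ 2 ≤ π k * ∑ j, W k j * (1 / π j * ‖x j‖ ^ 2) := by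
    calc ‖∑ j, W k j • x j‖ ^ 2 ≤ (∑ j, W k j * ‖x j‖) ^ 2 := by
          gcongr
          refine (norm_sum_le _ _).trans_eq (Finset.sum_congr rfl fun j _ => ?_)
          rw [norm_smul, Real.norm_of_nonneg (hW k j)]
      _ ≤ (∑ j, W k j * π j) * ∑ j, W k j * (1 / π j * ‖x j‖ ^ 2) := by
          refine Finset.sum_sq_le_sum_mul_sum_of_sq_le_mul _
            (fun j _ => mul_nonneg (hW k j) (hπ j).le)
            (fun j _ => mul_nonneg (hW k j) (by have := hπ j; positivity)) fun j _ => ?_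
          have := (hπ j).ne'
          field_simp
          rfl
      _ = π k * ∑ j, W k j * (1 / π j * ‖x j‖ ^ 2) := by rw [hπ_eig]
  refine Real.sqrt_le_sqrt ?_
  calc ∑ k, 1 / π k * ‖∑ j, W k j • x j‖ ^ 2
      ≤ ∑ k, ∑ j, W k j * (1 / π j * ‖x j‖ ^ 2) := Finset.sum_le_sum fun k _ => by
        have := hπ k
        calc 1 / π k * ‖∑ j, W k j • x j‖ ^ 2
            ≤ 1 / π k * (π k * ∑ j, W k j * (1 / π j * ‖x j‖ ^ 2)) := by gcongr; exact hrow k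
          _ = ∑ j, W k j * (1 / π j * ‖x j‖ ^ 2) := by field_simp
    _ = ∑ j, 1 / π j * ‖x j‖ ^ 2 := by
        rw [Finset.sum_comm]
        simp only [← Finset.sum_mul, hW_col, one_mul]

theorem weightedNorm_le_of_eq_sum_smul_sub {π : ι → ℝ} {W : Matrix ι ι ℝ}
    (hW : ∀ i j, 0 ≤ W i j) (hW_col : ∀ j, ∑ k, W k j = 1) (hπ : ∀ k, 0 < π k)
    (hπ_eig : ∀ k, ∑ j, W k j * π j = π k) {ρ β : ℝ} (hρ : 0 ≤ ρ) (hβ : 0 ≤ β) {w v y : ι → E}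
    (hv : ∀ j, ‖v j‖ ≤ ρ * ‖w j‖)
    (hw : w = (fun k => ∑ j, W k j • v j) - β • fun k => ∑ j, W k j • y j) :
    weightedNorm π w ≤ ρ * weightedNorm π w + β * weightedNorm π fun k => ∑ j, W k j • y j :=
  calc weightedNorm π w
      ≤ weightedNorm π (fun k => ∑ j, W k j • v j)
        + weightedNorm π (β • fun k => ∑ j, W k j • y j) := by
        conv_lhs => rw [hw]
        exact weightedNorm_sub_le (fun k => (hπ k).le) _ _
    _ ≤ weightedNorm π v + β * weightedNorm π fun k => ∑ j, W k j • y j := by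
        rw [weightedNorm_smul, abs_of_nonneg hβ]
        gcongr
        exact weightedNorm_sum_smul_le hW hW_col hπ hπ_eig v
    _ ≤ _ := by gcongr; exact weightedNorm_le_mul (fun k => (hπ k).le) hρ hv

end WeightedNorm

theorem stmt_10_general {n d : ℕ} (hn : 0 < n)
    (f : Fin n → EuclideanSpace ℝ (Fin d) → ℝ)
    (μ L : Fin n → ℝ) (W : Matrix (Fin n) (Fin n) ℝ) (π : Fin n → ℝ) (α : ℝ)
    (wα : Fin n → EuclideanSpace ℝ (Fin d))
    (hμ : ∀ k, 0 < μ k) (hμL : ∀ k, μ k ≤ L k)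
    (hdiff : ∀ k, Differentiable ℝ (f k))
    (hsc : ∀ k, ConvexOn ℝ Set.univ (fun x => f k x - μ k / 2 * ‖x‖ ^ 2))
    (hsm : ∀ k, LipschitzWith (L k).toNNReal (gradient (f k)))
    (hW_nonneg : ∀ i j, 0 ≤ W i j)
    (hW_col : ∀ j, ∑ k, W k j = 1)
    (hπ_pos : ∀ k, 0 < π k)
    (hπ_eig : ∀ k, ∑ j, W k j * π j = π k)
    (hα0 : 0 < α) (hα : α ≤ ⨅ k, 2 * n * π k / (L k + μ k))
    (hfix : ∀ k, wα k = ∑ j, W k j • (wα j - α • gradient (f j) ((1 / (n * π j)) • wα j))) :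
    Real.sqrt (∑ k, (1 / π k) * ‖wα k‖ ^ 2) ≤
      (1 / (⨅ k, μ k * L k / (n * π k * (μ k + L k)))) *
        Real.sqrt (∑ k, (1 / π k) * ‖∑ j, W k j • gradient (f j) 0‖ ^ 2) := by
  have : Nonempty (Fin n) := ⟨⟨0, hn⟩⟩
  have hnπ (k : Fin n) : 0 < (n : ℝ) * π k := mul_pos (Nat.cast_pos.2 hn) (hπ_pos k)
  have hL (k : Fin n) : 0 < L k := (hμ k).trans_le (hμL k)
  set rate : Fin n → ℝ := fun k => contractionRate (μ k) (L k) (n * π k)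
  set C := ⨅ k, rate k
  change weightedNorm π wα ≤ 1 / C * weightedNorm π fun k => ∑ j, W k j • gradient (f j) 0
  have hα_le (k : Fin n) : α ≤ 2 * (n * π k) / (L k + μ k) :=
    (hα.trans (ciInf_le (Set.finite_range _).bddBelow k)).trans_eq (by ring)
  have hC_le (k : Fin n) : C ≤ rate k := ciInf_le (Set.finite_range _).bddBelow k
  obtain ⟨k₀, hk₀ : rate k₀ = C⟩ := exists_eq_ciInf_of_finite (f := rate)
  have hC_pos : 0 < C := hk₀ ▸ contractionRate_pos (hμ k₀) (hL k₀) (hnπ k₀)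
  have hαC : 0 ≤ 1 - α * C :=
    sub_nonneg.2 (hk₀ ▸ mul_contractionRate_le_one (hμ k₀) (hL k₀) (hnπ k₀) (hα_le k₀))
  set v : Fin n → EuclideanSpace ℝ (Fin d) := fun j =>
    wα j - α • (gradient (f j) ((1 / (n * π j)) • wα j) - gradient (f j) 0)
  have hv (j : Fin n) : ‖v j‖ ≤ (1 - α * C) * ‖wα j‖ :=
    (norm_sub_smul_gradient_sub_le (fun z => (hdiff j z).hasGradientAt) (hμ j) (hμL j) (hsc j)
      (hsm j) (hnπ j) hα0.le (hα_le j) (wα j)).trans (by gcongr; exact hC_le j)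
  have hdecomp : wα = (fun k => ∑ j, W k j • v j) -
      α • fun k => ∑ j, W k j • gradient (f j) 0 := by
    funext k
    rw [hfix k]
    simp only [v, Pi.sub_apply, Pi.smul_apply, Finset.smul_sum, ← Finset.sum_sub_distrib]
    refine Finset.sum_congr rfl fun j _ => ?_
    module
  have hmain := weightedNorm_le_of_eq_sum_smul_sub hW_nonneg hW_col hπ_pos hπ_eig hαC hα0.le hv
    hdecomp
  rw [one_div_mul_eq_div, le_div_iff₀ hC_pos]
  nlinarith

theorem stmt_10 {n d : ℕ} (hn : 0 < n)
    (f : Fin n → EuclideanSpace ℝ (Fin d) → ℝ)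
    (μ L : Fin n → ℝ) (W : Matrix (Fin n) (Fin n) ℝ) (π : Fin n → ℝ) (α : ℝ)
    (wα : Fin n → EuclideanSpace ℝ (Fin d))
    (hμ : ∀ k, 0 < μ k) (hμL : ∀ k, μ k ≤ L k)
    (hdiff : ∀ k, Differentiable ℝ (f k))
    (hsc : ∀ k, ConvexOn ℝ Set.univ (fun x => f k x - μ k / 2 * ‖x‖ ^ 2))
    (hsm : ∀ k, LipschitzWith (L k).toNNReal (gradient (f k)))
    (hW_nonneg : ∀ i j, 0 ≤ W i j)
    (hW_col : ∀ j, ∑ k, W k j = 1)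
    (hπ_pos : ∀ k, 0 < π k)
    (hπ_sum : ∑ k, π k = 1)
    (hπ_eig : ∀ k, ∑ j, W k j * π j = π k)
    (hα0 : 0 < α) (hα : α ≤ ⨅ k, 2 * n * π k / (L k + μ k))
    (hfix : ∀ k, wα k = ∑ j, W k j • (wα j - α • gradient (f j) ((1 / (n * π j)) • wα j))) :
    Real.sqrt (∑ k, (1 / π k) * ‖wα k‖ ^ 2) ≤
      (1 / (⨅ k, μ k * L k / (n * π k * (μ k + L k)))) *
        Real.sqrt (∑ k, (1 / π k) * ‖∑ j, W k j • gradient (f j) 0‖ ^ 2) :=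
  stmt_10_general hn f μ L W π α wα hμ hμL hdiff hsc hsm hW_nonneg hW_col hπ_pos hπ_eig hα0 hα hfix
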